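/- For a canonical system G the following are equivalent: (1) G is strongly consistent (the empty sequent is not derivable from { ⇒ p₁, p₂ ⇒ }); (2) G is coherent; (3) G admits strong cut-elimination (every derivation of s from S can be replaced by one where all cut formulas occur in S). -/

import Mathlib

/-- A propositional language: a type of connectives with arities. -/
structure Lang where
  Conn : Type
  arity : Conn → ℕ

/-- Formulas over a language, with atoms indexed by ℕ. -/
inductive Fm (L : Lang) : Type
  | atom : ℕ → Fm L
  | conn : (c : L.Conn) → (Fin (L.arity c) → Fm L) → Fm L

/-- The substitution determined by its values on atoms. -/
def Fm.subst {L : Lang} (σ : ℕ → Fm L) : Fm L → Fm L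
  | .atom n => σ n
  | .conn c f => .conn c (fun i => (f i).subst σ)

/-- A non-strict single-conclusion sequent Γ ⇒ E. -/
structure Sequent (L : Lang) where
  left : Set (Fm L)
  right : Option (Fm L)

/-- A Horn clause over atoms p₁,…,pₙ (represented by `Fin n`). -/
structure Clause (n : ℕ) where
  lhs : Set (Fin n)
  rhs : Option (Fin n)

/-- A canonical right-introduction rule for a connective. -/
structure RightRule (L : Lang) where
  conn : L.Conn
  prem : Set (Clause (L.arity conn))

/-- A canonical left-introduction rule, with hard and soft premises. -/
structure LeftRule (L : Lang) where
  conn : L.Conn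
  hard : Set (Clause (L.arity conn))
  soft : Set (Set (Fin (L.arity conn)))

/-- A canonical system: a collection of canonical rules. -/
structure CanSys (L : Lang) where
  rights : Set (RightRule L)
  lefts : Set (LeftRule L)

/-- The sequent obtained by instantiating a clause with a substitution. -/
def Clause.seq {L : Lang} {n : ℕ} (σ : Fin n → Fm L) (c : Clause n) : Sequent L :=
  ⟨σ '' c.lhs, c.rhs.map σ⟩

/-- Derivability in a canonical system `G` from assumptions `S`,
where all cut formulas must belong to `C`. -/
inductive Deriv {L : Lang} (G : CanSys L) (S : Set (Sequent L)) (C : Set (Fm L)) :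
    Sequent L → Prop
  | hyp {s : Sequent L} : s ∈ S → Deriv G S C s
  | ax (φ : Fm L) : Deriv G S C ⟨{φ}, some φ⟩
  | weakL {Γ Γ' : Set (Fm L)} {E : Option (Fm L)} :
      Deriv G S C ⟨Γ, E⟩ → Γ ⊆ Γ' → Deriv G S C ⟨Γ', E⟩
  | weakR {Γ : Set (Fm L)} (ψ : Fm L) :
      Deriv G S C ⟨Γ, none⟩ → Deriv G S C ⟨Γ, some ψ⟩
  | cut {Γ Δ : Set (Fm L)} {φ : Fm L} {E : Option (Fm L)} :
      φ ∈ C → Deriv G S C ⟨Γ, some φ⟩ → Deriv G S C ⟨insert φ Δ, E⟩ →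
      Deriv G S C ⟨Γ ∪ Δ, E⟩
  | right {Γ : Set (Fm L)} (rr : RightRule L) (hr : rr ∈ G.rights)
      (σ : Fin (L.arity rr.conn) → Fm L) :
      (∀ c ∈ rr.prem, Deriv G S C ⟨Γ ∪ σ '' c.lhs, c.rhs.map σ⟩) →
      Deriv G S C ⟨Γ, some (Fm.conn rr.conn σ)⟩
  | left {Γ : Set (Fm L)} {E : Option (Fm L)} (lr : LeftRule L) (hl : lr ∈ G.lefts)
      (σ : Fin (L.arity lr.conn) → Fm L) :
      (∀ c ∈ lr.hard, Deriv G S C ⟨Γ ∪ σ '' c.lhs, c.rhs.map σ⟩) →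
      (∀ t ∈ lr.soft, Deriv G S C ⟨Γ ∪ σ '' t, E⟩) →
      Deriv G S C ⟨insert (Fm.conn lr.conn σ) Γ, E⟩

/-- The set of formulas occurring in some sequent of `S`. -/
def cutFms {L : Lang} (S : Set (Sequent L)) : Set (Fm L) :=
  {φ | ∃ s ∈ S, φ ∈ s.left ∨ s.right = some φ}

/-- Classical satisfaction of a Horn clause by a two-valued assignment. -/
def Clause.sat {n : ℕ} (v : Fin n → Bool) (c : Clause n) : Prop :=
  (∃ p ∈ c.lhs, v p = false) ∨ (∃ q, c.rhs = some q ∧ v q = true)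

/-- Joint classical satisfiability of the premises of a left rule and a right rule. -/
def JointSat {L : Lang} (lr : LeftRule L) (rr : RightRule L)
    (h : L.arity lr.conn = L.arity rr.conn) : Prop :=
  ∃ v : Fin (L.arity lr.conn) → Bool,
    (∀ c ∈ lr.hard, c.sat v) ∧
    (∀ t ∈ lr.soft, ∃ p ∈ t, v p = false) ∧
    (∀ c ∈ rr.prem, c.sat (fun i => v (Fin.cast h.symm i)))

/-- Coherence: matching left/right rule pairs have jointly unsatisfiable premises. -/
def Coherent {L : Lang} (G : CanSys L) : Prop :=
  ∀ lr ∈ G.lefts, ∀ rr ∈ G.rights, ∀ h : lr.conn = rr.conn,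
    ¬ JointSat lr rr (congrArg L.arity h)

section Semantics

variable {L : Lang} {W : Type}

/-- A sequent is locally true at a world. -/
def locT (v : W → Fm L → Bool) (a : W) (s : Sequent L) : Prop :=
  (∃ ψ ∈ s.left, v a ψ = false) ∨ (∃ φ, s.right = some φ ∧ v a φ = true)

/-- A sequent is (absolutely) true at a world: locally true at all successors. -/
def absT (le : W → W → Prop) (v : W → Fm L → Bool) (a : W) (s : Sequent L) : Prop :=
  ∀ b, le a b → locT v b s

/-- Persistence of a valuation. -/
def PersistentU (le : W → W → Prop) (v : W → Fm L → Bool) : Prop :=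
  ∀ (φ : Fm L) (a b : W), le a b → v a φ = true → v b φ = true

/-- A valuation respects a right-introduction rule. -/
def RespR (le : W → W → Prop) (v : W → Fm L → Bool) (rr : RightRule L) : Prop :=
  ∀ (a : W) (σ : Fin (L.arity rr.conn) → Fm L),
    (∀ c ∈ rr.prem, absT le v a (c.seq σ)) → v a (Fm.conn rr.conn σ) = true

/-- A valuation respects a left-introduction rule. -/
def RespL (le : W → W → Prop) (v : W → Fm L → Bool) (lr : LeftRule L) : Prop :=
  ∀ (a : W) (σ : Fin (L.arity lr.conn) → Fm L),
    (∀ c ∈ lr.hard, absT le v a (c.seq σ)) →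
    (∀ t ∈ lr.soft, locT v a ⟨σ '' t, (none : Option (Fm L))⟩) →
    v a (Fm.conn lr.conn σ) = false

/-- A valuation is G-legal: it respects all rules of G. -/
def LegalU (G : CanSys L) (le : W → W → Prop) (v : W → Fm L → Bool) : Prop :=
  (∀ rr ∈ G.rights, RespR le v rr) ∧ (∀ lr ∈ G.lefts, RespL le v lr)

end Semantics

/-- Semantic consequence: every G-legal frame which is a model of S is a model of s. -/
def SemConseq {L : Lang} (G : CanSys L) (S : Set (Sequent L)) (s : Sequent L) : Prop :=
  ∀ (W : Type) (le : W → W → Prop),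
    (∀ a, le a a) → (∀ a b c, le a b → le b c → le a c) →
    (∀ a b, le a b → le b a → a = b) → Nonempty W →
    ∀ v : W → Fm L → Bool, PersistentU le v → LegalU G le v →
      (∀ t ∈ S, ∀ a, locT v a t) → (∀ a, locT v a s)

/-- Strong consistency: the empty sequent is not derivable from { ⇒ p₁, p₂ ⇒ }. -/
def StronglyConsistent {L : Lang} (G : CanSys L) : Prop :=
  ¬ Deriv G ({⟨∅, some (Fm.atom 0)⟩, ⟨{Fm.atom 1}, none⟩} : Set (Sequent L))
      Set.univ ⟨∅, none⟩

/-- Strong cut-elimination: all cuts can be restricted to formulas occurring in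
the assumptions. -/
def StrongCutElim {L : Lang} (G : CanSys L) : Prop :=
  ∀ (S : Set (Sequent L)) (s : Sequent L),
    Deriv G S Set.univ s → Deriv G S (cutFms S) s

/-! Coherence gives cut admissibility, by induction on the cut formula `φ`: a cut on `φ ∉ C` is
pushed up the derivation of `φ, Δ ⇒ E` and then up that of `Γ ⇒ φ`, until both sides introduce
`φ = ⋄(σ)`. By coherence the valuation `p ↦ [X ⇒ σ p is derivable]` falsifies a premise of one of
the two rules. The left atoms of that premise are derivable and its right atom is not, so cuts on
the smaller formulas `σ p` turn it into `X ⇒ E`.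

Conversely, if `v` satisfies the premises of a left and a right rule for `⋄`, substituting `p₁` or
`p₂` for each atom according to `v` derives both `⇒ ⋄(σ)` and `⋄(σ) ⇒` from `{⇒ p₁, p₂ ⇒}`.
With cuts on `p₁` and `p₂` only, every sequent derivable from these two assumptions whose left side
lies in `{p₁}` has a right side other than `p₂`; in particular the empty sequent is not derivable. -/

section CutAdmissibility

variable {L : Lang}

def CutAdmissible (G : CanSys L) (S : Set (Sequent L)) (C : Set (Fm L)) (φ : Fm L) : Prop :=
  ∀ Γ Δ E, Deriv G S C ⟨Γ, some φ⟩ → Deriv G S C ⟨insert φ Δ, E⟩ → Deriv G S C ⟨Γ ∪ Δ, E⟩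

variable {G : CanSys L} {S : Set (Sequent L)} {C : Set (Fm L)}

theorem Deriv.weakRight {Γ : Set (Fm L)} (d : Deriv G S C ⟨Γ, none⟩) :
    ∀ E, Deriv G S C ⟨Γ, E⟩
  | none => d
  | some ψ => d.weakR ψ

theorem Deriv.multicut {X F : Set (Fm L)} {E : Option (Fm L)} (hF : F.Finite)
    (hadm : ∀ φ ∈ F, CutAdmissible G S C φ) (hder : ∀ φ ∈ F, Deriv G S C ⟨X, some φ⟩)
    (d : Deriv G S C ⟨X ∪ F, E⟩) : Deriv G S C ⟨X, E⟩ := by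
  induction F, hF using Set.Finite.induction_on with
  | empty => simpa using d
  | @insert φ F _ _ ih =>
    rw [Set.union_insert] at d
    have d' := hadm φ (F.mem_insert φ) X (X ∪ F) E (hder φ (F.mem_insert φ)) d
    exact ih (fun ψ hψ => hadm ψ (Set.mem_insert_of_mem φ hψ))
      (fun ψ hψ => hder ψ (Set.mem_insert_of_mem φ hψ)) (d'.weakL (by tauto_set))

open Classical in
theorem Deriv.none_of_not_sat {n : ℕ} {σ : Fin n → Fm L} {cl : Clause n} {X : Set (Fm L)}
    (hadm : ∀ p, CutAdmissible G S C (σ p))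
    (hns : ¬ cl.sat fun p => decide (Deriv G S C ⟨X, some (σ p)⟩))
    (d : Deriv G S C ⟨X ∪ σ '' cl.lhs, cl.rhs.map σ⟩) : Deriv G S C ⟨X, none⟩ := by
  simp only [Clause.sat, not_or, not_exists, not_and, decide_eq_true_eq,
    decide_eq_false_iff_not] at hns
  obtain ⟨hlhs, hrhs⟩ := hns
  have hX : Deriv G S C ⟨X, cl.rhs.map σ⟩ :=
    d.multicut ((Set.toFinite _).image σ) (by simpa using fun p _ => hadm p)
      (by simpa using hlhs)
  cases hq : cl.rhs with
  | none => simpa [hq] using hX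
  | some q => simp only [hq, Option.map_some] at hX; exact absurd hX (hrhs q hq)

theorem Deriv.of_principal_premises (hG : Coherent G) {lr : LeftRule L} (hl : lr ∈ G.lefts)
    {prem : Set (Clause (L.arity lr.conn))} (hr : ⟨lr.conn, prem⟩ ∈ G.rights)
    {σ : Fin (L.arity lr.conn) → Fm L} (hadm : ∀ p, CutAdmissible G S C (σ p))
    {X : Set (Fm L)} {E : Option (Fm L)}
    (hhard : ∀ cl ∈ lr.hard, Deriv G S C ⟨X ∪ σ '' cl.lhs, cl.rhs.map σ⟩)
    (hsoft : ∀ t ∈ lr.soft, Deriv G S C ⟨X ∪ σ '' t, E⟩)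
    (hprem : ∀ cl ∈ prem, Deriv G S C ⟨X ∪ σ '' cl.lhs, cl.rhs.map σ⟩) :
    Deriv G S C ⟨X, E⟩ := by
  classical
  set v : Fin (L.arity lr.conn) → Bool := fun p => decide (Deriv G S C ⟨X, some (σ p)⟩)
  by_cases hvhard : ∀ cl ∈ lr.hard, cl.sat v
  · by_cases hvsoft : ∀ t ∈ lr.soft, ∃ p ∈ t, v p = false
    · have hvprem : ¬ ∀ cl ∈ prem, cl.sat v := fun h => hG lr hl _ hr rfl ⟨v, hvhard, hvsoft, h⟩
      push Not at hvprem
      obtain ⟨cl, hcl, hns⟩ := hvprem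
      exact (none_of_not_sat hadm hns (hprem cl hcl)).weakRight E
    · push Not at hvsoft
      obtain ⟨t, ht, hvt⟩ := hvsoft
      exact (hsoft t ht).multicut ((Set.toFinite _).image σ) (by simpa using fun p _ => hadm p)
        (by simpa [v] using hvt)
  · push Not at hvhard
    obtain ⟨cl, hcl, hns⟩ := hvhard
    exact (none_of_not_sat hadm hns (hhard cl hcl)).weakRight E

theorem Deriv.cut_principal_left (hG : Coherent G) (hCS : cutFms S ⊆ C) {lr : LeftRule L}
    (hl : lr ∈ G.lefts) {σ : Fin (L.arity lr.conn) → Fm L}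
    (hadm : ∀ p, CutAdmissible G S C (σ p)) (hφ : Fm.conn lr.conn σ ∉ C)
    {Δ : Set (Fm L)} {E : Option (Fm L)}
    (hhard : ∀ cl ∈ lr.hard, Deriv G S C ⟨Δ ∪ σ '' cl.lhs, cl.rhs.map σ⟩)
    (hsoft : ∀ t ∈ lr.soft, Deriv G S C ⟨Δ ∪ σ '' t, E⟩) {s : Sequent L}
    (d : Deriv G S C s) (hs : s.right = some (Fm.conn lr.conn σ)) :
    Deriv G S C ⟨s.left ∪ Δ, E⟩ := by
  induction d with
  | hyp hS => exact absurd (hCS ⟨_, hS, Or.inr hs⟩) hφ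
  | ax ψ =>
    cases hs
    simpa using Deriv.left lr hl σ hhard hsoft
  | weakL _ hsub ih => exact (ih hs).weakL (Set.union_subset_union_left Δ hsub)
  | weakR ψ d _ => exact (d.weakL Set.subset_union_left).weakRight E
  | cut hψ d₁ _ _ ih₂ =>
    have d₂ := ih₂ hs
    rw [Set.insert_union] at d₂
    exact (Deriv.cut hψ d₁ d₂).weakL (by tauto_set)
  | right rr hrr τ hprem =>
    obtain ⟨c, prem⟩ := rr
    cases hs
    exact of_principal_premises hG hl hrr hadm
      (fun cl hcl => (hhard cl hcl).weakL (by tauto_set))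
      (fun t ht => (hsoft t ht).weakL (by tauto_set))
      (fun cl hcl => (hprem cl hcl).weakL (by tauto_set))
  | left lr' hl' τ hh _ _ ihs =>
    rw [Set.insert_union]
    exact Deriv.left lr' hl' τ (fun cl hcl => (hh cl hcl).weakL (by tauto_set))
      (fun t ht => (ihs t ht hs).weakL (by tauto_set))

theorem Deriv.cut_of_not_mem (hG : Coherent G) (hCS : cutFms S ⊆ C) {φ : Fm L} (hφ : φ ∉ C)
    (hsub : ∀ c f, φ = Fm.conn c f → ∀ i, CutAdmissible G S C (f i)) {Γ : Set (Fm L)}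
    (d₁ : Deriv G S C ⟨Γ, some φ⟩) {s : Sequent L} (d : Deriv G S C s) :
    Deriv G S C ⟨Γ ∪ (s.left \ {φ}), s.right⟩ := by
  induction d with
  | hyp hS =>
    have hφs : φ ∉ _ := fun h => hφ (hCS ⟨_, hS, Or.inl h⟩)
    rw [Set.sdiff_singleton_eq_self hφs]
    exact (Deriv.hyp hS).weakL Set.subset_union_right
  | ax ψ =>
    by_cases hψ : ψ = φ
    · subst hψ
      exact d₁.weakL Set.subset_union_left
    · exact (Deriv.ax ψ).weakL (by simp [hψ])
  | weakL _ hΓ ih => exact ih.weakL (by tauto_set)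
  | weakR ψ _ ih => exact ih.weakR ψ
  | @cut _ _ ψ _ hψ _ _ ih₁ ih₂ =>
    have hψφ : ψ ∉ ({φ} : Set (Fm L)) := fun h => hφ (Set.mem_singleton_iff.mp h ▸ hψ)
    rw [Set.insert_sdiff_of_notMem _ hψφ, Set.union_insert] at ih₂
    exact (Deriv.cut hψ ih₁ ih₂).weakL (by tauto_set)
  | right rr hrr τ _ ih =>
    exact Deriv.right rr hrr τ fun cl hcl => (ih cl hcl).weakL (by tauto_set)
  | @left Γ₀ E lr hl τ _ _ ihh ihs =>
    have hhard : ∀ cl ∈ lr.hard,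
        Deriv G S C ⟨(Γ ∪ (Γ₀ \ {φ})) ∪ τ '' cl.lhs, cl.rhs.map τ⟩ :=
      fun cl hcl => (ihh cl hcl).weakL (by tauto_set)
    have hsoft : ∀ t ∈ lr.soft, Deriv G S C ⟨(Γ ∪ (Γ₀ \ {φ})) ∪ τ '' t, E⟩ :=
      fun t ht => (ihs t ht).weakL (by tauto_set)
    by_cases hψ : Fm.conn lr.conn τ = φ
    · subst hψ
      exact (cut_principal_left hG hCS hl (hsub _ _ rfl) hφ hhard hsoft d₁ rfl).weakL
        (by tauto_set)
    · dsimp only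
      rw [Set.insert_sdiff_of_notMem _ (Set.notMem_singleton_iff.mpr hψ), Set.union_insert]
      exact Deriv.left lr hl τ hhard hsoft

theorem cutAdmissible_of_subformulas (hG : Coherent G) (hCS : cutFms S ⊆ C) {φ : Fm L}
    (hsub : ∀ c f, φ = Fm.conn c f → ∀ i, CutAdmissible G S C (f i)) :
    CutAdmissible G S C φ := by
  intro Γ Δ E d₁ d₂
  by_cases hφ : φ ∈ C
  · exact Deriv.cut hφ d₁ d₂
  · exact (Deriv.cut_of_not_mem hG hCS hφ hsub d₁ d₂).weakL
      (Set.union_subset_union_right Γ (Set.sdiff_singleton_subset_iff.mpr subset_rfl))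

theorem cutAdmissible (hG : Coherent G) (hCS : cutFms S ⊆ C) (φ : Fm L) :
    CutAdmissible G S C φ := by
  induction φ with
  | atom => exact cutAdmissible_of_subformulas hG hCS nofun
  | conn c f ih => exact cutAdmissible_of_subformulas hG hCS (by rintro _ _ ⟨⟩; exact ih)

theorem Coherent.strongCutElim (hG : Coherent G) : StrongCutElim G := by
  intro S s d
  induction d with
  | hyp h => exact Deriv.hyp h
  | ax φ => exact Deriv.ax φ
  | weakL _ h ih => exact ih.weakL h
  | weakR ψ _ ih => exact ih.weakR ψ
  | cut _ _ _ ih₁ ih₂ => exact cutAdmissible hG subset_rfl _ _ _ _ ih₁ ih₂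
  | right rr hr σ _ ih => exact Deriv.right rr hr σ ih
  | left lr hl σ _ _ ihh ihs => exact Deriv.left lr hl σ ihh ihs

end CutAdmissibility

section StrongConsistency

variable {L : Lang} {G : CanSys L} {C : Set (Fm L)}

def S₀ (L : Lang) : Set (Sequent L) :=
  {⟨∅, some (Fm.atom 0)⟩, ⟨{Fm.atom 1}, none⟩}

theorem Deriv.exists_right_ne_atom_one (hC : C ⊆ {Fm.atom 0, Fm.atom 1}) {s : Sequent L}
    (d : Deriv G (S₀ L) C s) (hs : s.left ⊆ {Fm.atom 0}) :
    ∃ ψ, s.right = some ψ ∧ ψ ≠ Fm.atom 1 := by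
  induction d with
  | hyp hS =>
    rcases hS with rfl | rfl
    · exact ⟨_, rfl, by simp⟩
    · simp at hs
  | ax ψ => exact ⟨ψ, rfl, by simp_all⟩
  | weakL _ hsub ih => exact ih (hsub.trans hs)
  | weakR ψ _ ih => obtain ⟨_, ⟨⟩, _⟩ := ih hs
  | cut hψ _ _ ih₁ ih₂ =>
    rcases hC hψ with rfl | rfl
    · exact ih₂ (Set.insert_subset rfl (Set.subset_union_right.trans hs))
    · obtain ⟨_, ⟨⟩, h⟩ := ih₁ (Set.subset_union_left.trans hs)
      exact absurd rfl h
  | right => exact ⟨_, rfl, nofun⟩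
  | left => simp at hs

theorem cutFms_S₀_subset : cutFms (S₀ L) ⊆ {Fm.atom 0, Fm.atom 1} := by
  rintro φ ⟨s, rfl | rfl, h | h⟩ <;> simp_all

theorem StrongCutElim.stronglyConsistent (hG : StrongCutElim G) : StronglyConsistent G :=
  fun d => by
    obtain ⟨_, ⟨⟩, _⟩ := (hG _ _ d).exists_right_ne_atom_one cutFms_S₀_subset (Set.empty_subset _)

def atomOfBool (b : Bool) : Fm L :=
  if b then Fm.atom 0 else Fm.atom 1

theorem deriv_S₀_of_atom_one_mem {Γ : Set (Fm L)} (h : Fm.atom 1 ∈ Γ) (E : Option (Fm L)) :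
    Deriv G (S₀ L) C ⟨Γ, E⟩ :=
  ((Deriv.hyp (by simp [S₀])).weakL (Set.singleton_subset_iff.mpr h)).weakRight E

theorem deriv_S₀_of_sat {n : ℕ} {v : Fin n → Bool} {cl : Clause n} (h : cl.sat v)
    (Γ : Set (Fm L)) :
    Deriv G (S₀ L) C ⟨Γ ∪ (atomOfBool ∘ v) '' cl.lhs, cl.rhs.map (atomOfBool ∘ v)⟩ := by
  rcases h with ⟨p, hp, hvp⟩ | ⟨q, hq, hvq⟩
  · exact deriv_S₀_of_atom_one_mem (Or.inr ⟨p, hp, by simp [atomOfBool, hvp]⟩) _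
  · simp only [hq, Option.map_some, Function.comp_apply, atomOfBool, hvq, if_true]
    exact (Deriv.hyp (by simp [S₀])).weakL (Set.empty_subset _)

theorem StronglyConsistent.coherent (hG : StronglyConsistent G) : Coherent G := by
  rintro lr hl ⟨c, prem⟩ hr (h : lr.conn = c)
  subst h
  rintro ⟨v, hhard, hsoft, hprem⟩
  let σ : Fin (L.arity lr.conn) → Fm L := atomOfBool ∘ v
  have dl : Deriv G (S₀ L) Set.univ ⟨insert (Fm.conn lr.conn σ) ∅, none⟩ :=
    Deriv.left lr hl σ (fun cl hcl => deriv_S₀_of_sat (hhard cl hcl) ∅) fun t ht => by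
      obtain ⟨p, hp, hvp⟩ := hsoft t ht
      exact deriv_S₀_of_atom_one_mem (Or.inr ⟨p, hp, by simp [σ, atomOfBool, hvp]⟩) _
  have dr : Deriv G (S₀ L) Set.univ ⟨∅, some (Fm.conn lr.conn σ)⟩ :=
    Deriv.right ⟨lr.conn, prem⟩ hr σ fun cl hcl => deriv_S₀_of_sat (v := v) (hprem cl hcl) ∅
  exact hG ((Deriv.cut (Set.mem_univ _) dr dl).weakL (Set.union_self ∅).subset)

end StrongConsistency

/-- For canonical systems, strong consistency, coherence and
strong cut-elimination are equivalent. -/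
theorem strongCons_coherent_strongCutElim_equiv {L : Lang} (G : CanSys L) :
    (StronglyConsistent G ↔ Coherent G) ∧ (Coherent G ↔ StrongCutElim G) :=
  ⟨⟨StronglyConsistent.coherent, fun h => h.strongCutElim.stronglyConsistent⟩,
    ⟨Coherent.strongCutElim, fun h => h.stronglyConsistent.coherent⟩⟩
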